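/- arXiv:2501.08158 — 5 statements merged into one kernel-verified Lean document; each statement's English description precedes it below -/
import Mathlib

section
/- Let p be an odd prime, k ≥ 2 an integer, and s a finite multiset of complex p^k-th roots of unity. Then there exists a sub-multiset s₀ of s such that the value |s₀| equals |s|, the value |s₀^{(p^k)}| equals |s^{(p^k)}|, and no nonempty sub-multiset of s₀ has value 0. -/
open CategoryTheory

/-- `Qcyc N` is the `N`-th cyclotomic field `ℚ(ζ_N)`, realised as the subfield of `ℂ`
generated by all `N`-th roots of unity. -/
noncomputable def Qcyc (N : ℕ) : IntermediateField ℚ ℂ :=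
  IntermediateField.adjoin ℚ {z : ℂ | z ^ N = 1}

/-- `Qadj c` is the subfield `ℚ(c)` of `ℂ` generated by a complex number `c`. -/
noncomputable def Qadj (c : ℂ) : IntermediateField ℚ ℂ :=
  IntermediateField.adjoin ℚ {c}

/-- `f` is the conductor of the complex number `c`: the least positive integer `N`
with `c ∈ ℚ(ζ_N)`. -/
def IsConductorOf (c : ℂ) (f : ℕ) : Prop :=
  IsLeast {N : ℕ | 0 < N ∧ c ∈ Qcyc N} f

/-- `f` is the conductor of the character `χ`: the least positive integer `N` such that all
values of `χ` lie in `ℚ(ζ_N)`. -/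
def IsCharConductor {G : Type*} [Monoid G] (χ : G → ℂ) (f : ℕ) : Prop :=
  IsLeast {N : ℕ | 0 < N ∧ ∀ g, χ g ∈ Qcyc N} f

/-- Property 1.3 of Navarro–Tiep for `(G, χ, p)`: writing the conductor of `χ` as
`f = p ^ a * m` with `p ∤ m` (so that `p ^ a = p ^ (f.factorization p)` is the `p`-part of `f`),
there is a `p`-element `g ∈ G` such that `p ∤ [ℚ(ζ_{p^a}) : ℚ(χ(g))]`. -/
def Property13 {G : Type*} [Group G] (χ : G → ℂ) (p : ℕ) : Prop :=
  ∀ f : ℕ, IsCharConductor χ f →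
    ∃ g : G, (∃ j : ℕ, orderOf g = p ^ j) ∧
      ¬ p ∣ (Qadj (χ g)).relfinrank (Qcyc (p ^ f.factorization p))

lemma swap_sum (t : Multiset ℂ) (n : ℕ) (f : ℕ → ℂ → ℂ) :
    ∑ j ∈ Finset.range n, (t.map (f j)).sum
      = (t.map (fun z => ∑ j ∈ Finset.range n, f j z)).sum := by
  induction t using Multiset.induction with
  | empty => simp
  | cons a t ih => simp [Finset.sum_add_distrib, ih]

open Polynomial in
lemma key (p k : ℕ) (hp : p.Prime) (hk : 2 ≤ k) (t : Multiset ℂ)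
    (ht : ∀ z ∈ t, z ^ p ^ k = 1) (h0 : t.sum = 0) :
    (t.filter (fun z => orderOf z = p ^ k)).sum = 0 := by
  classical
  have hpk0 : p ^ k ≠ 0 := pow_ne_zero _ hp.pos.ne'
  haveI : NeZero (p ^ k) := ⟨hpk0⟩
  set ζ : ℂ := Complex.exp (2 * Real.pi * Complex.I / (p ^ k : ℕ)) with hζdef
  have hζ : IsPrimitiveRoot ζ (p ^ k) := Complex.isPrimitiveRoot_exp _ hpk0
  set E : ℂ → ℕ := fun z => if h : ∃ i, ζ ^ i = z then h.choose else 0 with hE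
  have hEspec : ∀ z ∈ t, ζ ^ E z = z := by
    intro z hz
    obtain ⟨i, _, hi⟩ := hζ.eq_pow_of_pow_eq_one (ht z hz)
    have hex : ∃ i, ζ ^ i = z := ⟨i, hi⟩
    simp only [hE, dif_pos hex]
    exact hex.choose_spec
  have hconj : ∀ c : ℕ, Nat.Coprime c (p ^ k) →
      (t.map (fun z => z ^ c)).sum = 0 := by
    intro c hc
    set P : ℚ[X] := (t.map (fun z => (X : ℚ[X]) ^ E z)).sum with hP
    have haev : ∀ x : ℂ, aeval x P = (t.map (fun z => x ^ E z)).sum := by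
      intro x
      rw [hP, map_multiset_sum, Multiset.map_map]
      congr 1
      apply Multiset.map_congr rfl
      intro z _
      simp
    have hPζ : aeval ζ P = 0 := by
      rw [haev, Multiset.map_congr rfl (fun z hz => hEspec z hz)]
      simpa using h0
    have hdvd : minpoly ℚ ζ ∣ P := minpoly.dvd ℚ ζ hPζ
    have hζc : IsPrimitiveRoot (ζ ^ c) (p ^ k) := hζ.pow_of_coprime c hc
    have hroot : aeval (ζ ^ c) (minpoly ℚ ζ) = 0 := by
      rw [← Polynomial.cyclotomic_eq_minpoly_rat hζ (Nat.pos_of_ne_zero hpk0)]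
      have := hζc.isRoot_cyclotomic (Nat.pos_of_ne_zero hpk0)
      rw [Polynomial.aeval_def, ← Polynomial.eval_map]
      simpa [Polynomial.map_cyclotomic] using this
    obtain ⟨Q, hQ⟩ := hdvd
    have hPζc : aeval (ζ ^ c) P = 0 := by rw [hQ, map_mul, hroot, zero_mul]
    rw [haev] at hPζc
    rw [← hPζc]
    congr 1
    apply Multiset.map_congr rfl
    intro z hz
    conv_rhs => rw [← pow_mul, mul_comm, pow_mul, hEspec z hz]
  have hcop : ∀ j : ℕ, Nat.Coprime (1 + j * p ^ (k - 1)) (p ^ k) := by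
    intro j
    apply Nat.Coprime.pow_right
    rw [Nat.coprime_comm, hp.coprime_iff_not_dvd]
    intro hdvd
    have h1 : p ∣ j * p ^ (k - 1) :=
      Dvd.dvd.mul_left (dvd_pow_self p (by omega)) j
    have : p ∣ 1 := (Nat.dvd_add_right h1).mp (by rwa [Nat.add_comm])
    exact hp.one_lt.ne' (Nat.dvd_one.mp this)
  have hord : ∀ z ∈ t, (z ^ p ^ (k - 1) = 1 ↔ orderOf z ≠ p ^ k) := by
    intro z hz
    have hdvd : orderOf z ∣ p ^ k := orderOf_dvd_of_pow_eq_one (ht z hz)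
    constructor
    · intro h1 heq
      have h2 : orderOf z ∣ p ^ (k - 1) := orderOf_dvd_of_pow_eq_one h1
      rw [heq] at h2
      have := (Nat.pow_dvd_pow_iff_le_right hp.one_lt).mp h2
      omega
    · intro hne
      obtain ⟨i, hik, hi⟩ := (Nat.dvd_prime_pow hp).mp hdvd
      have hik' : i ≤ k - 1 := by
        by_contra h
        have hik2 : i = k := by omega
        exact hne (hi.trans (by rw [hik2]))
      have : orderOf z ∣ p ^ (k - 1) := hi ▸ pow_dvd_pow p hik'
      exact orderOf_dvd_iff_pow_eq_one.mp this
  have hw : ∀ z ∈ t, ∑ j ∈ Finset.range p, z ^ (1 + j * p ^ (k - 1))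
      = if orderOf z ≠ p ^ k then (p : ℂ) * z else 0 := by
    intro z hz
    have hterm : ∀ j : ℕ, z ^ (1 + j * p ^ (k - 1)) = z * (z ^ p ^ (k - 1)) ^ j := by
      intro j
      rw [pow_add, pow_one, mul_comm j, pow_mul]
    by_cases hcase : z ^ p ^ (k - 1) = 1
    · rw [if_pos ((hord z hz).mp hcase)]
      simp [hterm, hcase, mul_comm]
    · rw [if_neg (fun hne => hcase ((hord z hz).mpr hne))]
      have hwp : (z ^ p ^ (k - 1)) ^ p = 1 := by
        rw [← pow_mul, ← pow_succ]
        have : k - 1 + 1 = k := by omega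
        rw [this]; exact ht z hz
      have hgeom : ∑ j ∈ Finset.range p, (z ^ p ^ (k - 1)) ^ j = 0 := by
        rw [geom_sum_eq hcase, hwp, sub_self, zero_div]
      calc ∑ j ∈ Finset.range p, z ^ (1 + j * p ^ (k - 1))
          = z * ∑ j ∈ Finset.range p, (z ^ p ^ (k - 1)) ^ j := by
            rw [Finset.mul_sum]; exact Finset.sum_congr rfl fun j _ => hterm j
        _ = 0 := by rw [hgeom, mul_zero]
  have hmain : (t.map (fun z => if orderOf z ≠ p ^ k then (p : ℂ) * z else 0)).sum = 0 := by
    rw [← Multiset.map_congr rfl hw, ← swap_sum]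
    exact Finset.sum_eq_zero fun j _ => hconj _ (hcop j)
  -- split t into the two filters
  have hsplit := Multiset.filter_add_not (fun z => orderOf z = p ^ k) t
  have hlow : (t.filter (fun z => ¬ orderOf z = p ^ k)).sum = 0 := by
    have hmap : (t.map (fun z => if orderOf z ≠ p ^ k then (p : ℂ) * z else 0)).sum
        = (p : ℂ) * (t.filter (fun z => ¬ orderOf z = p ^ k)).sum := by
      conv_lhs => rw [← hsplit]
      rw [Multiset.map_add, Multiset.sum_add]
      have h1 : ((t.filter (fun z => orderOf z = p ^ k)).map
          (fun z => if orderOf z ≠ p ^ k then (p : ℂ) * z else 0)).sum = 0 := by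
        rw [Multiset.map_congr rfl (fun z hz => by
          rw [if_neg (by simpa using (Multiset.of_mem_filter hz))])]
        simp
      have h2 : ((t.filter (fun z => ¬ orderOf z = p ^ k)).map
          (fun z => if orderOf z ≠ p ^ k then (p : ℂ) * z else 0)).sum
          = (p : ℂ) * (t.filter (fun z => ¬ orderOf z = p ^ k)).sum := by
        rw [Multiset.map_congr rfl (fun z hz => by
          rw [if_pos (by simpa using (Multiset.of_mem_filter hz))])]
        rw [Multiset.sum_map_mul_left]
        simp
      rw [h1, h2, zero_add]
    have hp0 : (p : ℂ) ≠ 0 := Nat.cast_ne_zero.mpr hp.pos.ne'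
    have := hmap ▸ hmain
    exact (mul_eq_zero.mp this).resolve_left hp0
  have := congrArg Multiset.sum hsplit
  rw [Multiset.sum_add, hlow, add_zero] at this
  rw [this, h0]


open scoped Classical in
/-- every multiset of `p^k`-th roots of unity has a sub-multiset with the same
value, the same value on entries of order exactly `p^k`, and no nonempty vanishing
sub-multiset. -/
theorem stmt1 (p k : ℕ) (hp : p.Prime) (hodd : Odd p) (hk : 2 ≤ k)
    (s : Multiset ℂ) (hs : ∀ z ∈ s, z ^ p ^ k = 1) :
    ∃ s₀ : Multiset ℂ, s₀ ≤ s ∧ s₀.sum = s.sum ∧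
      (s₀.filter (fun z => orderOf z = p ^ k)).sum
        = (s.filter (fun z => orderOf z = p ^ k)).sum ∧
      ∀ t : Multiset ℂ, t ≤ s₀ → t ≠ 0 → t.sum ≠ 0 := by
  revert hs
  induction s using Multiset.strongInductionOn with
  | ih s ih =>
    intro hs
    by_cases h : ∀ t : Multiset ℂ, t ≤ s → t ≠ 0 → t.sum ≠ 0
    · exact ⟨s, le_rfl, rfl, rfl, h⟩
    · push_neg at h
      obtain ⟨t, hts, htne, htsum⟩ := h
      have hlt : s - t < s := by
        refine lt_of_le_of_ne tsub_le_self (fun he => htne ?_)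
        have hc := congrArg Multiset.card he
        rw [Multiset.card_sub hts] at hc
        have hle := Multiset.card_le_card hts
        have : Multiset.card t = 0 := by omega
        exact Multiset.card_eq_zero.mp this
      have hseq : s - t + t = s := tsub_add_cancel_of_le hts
      obtain ⟨s₀, hle, hsum, hfsum, hmin⟩ := ih (s - t) hlt
        (fun z hz => hs z (Multiset.mem_of_le (tsub_le_self) hz))
      refine ⟨s₀, hle.trans tsub_le_self, ?_, ?_, hmin⟩
      · rw [hsum]
        have h2 := congrArg Multiset.sum hseq
        rw [Multiset.sum_add, htsum, add_zero] at h2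
        exact h2
      · rw [hfsum]
        have hkey := key p k hp hk t (fun z hz => hs z (Multiset.mem_of_le hts hz)) htsum
        have h2 := congrArg
          (fun u => (Multiset.filter (fun z => orderOf z = p ^ k) u).sum) hseq
        simp only [Multiset.filter_add, Multiset.sum_add] at h2
        rw [hkey, add_zero] at h2
        exact h2
end

section
/- Let p be an odd prime, k ≥ 2 an integer, and let s₁ and s₂ be finite multisets of complex p^k-th roots of unity such that no nonempty sub-multiset of s₁ sums to 0 and no nonempty sub-multiset of s₂ sums to 0. If |s₁| = |s₂|, then s₁ = s₂ as multisets. -/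
open CategoryTheory

open Polynomial in
lemma key_const (p n : ℕ) (hp : p.Prime) (ζ : ℂ) (hζ : IsPrimitiveRoot ζ (p ^ (n + 1)))
    (e : ℕ → ℤ)
    (hsum : ∑ a ∈ Finset.range (p ^ (n + 1)), (e a : ℂ) * ζ ^ a = 0) :
    ∀ r < p ^ n, ∀ j < p, e (r + j * p ^ n) = e r := by
  have hNpos : 0 < p ^ (n + 1) := pow_pos hp.pos _
  set N := p ^ (n + 1) with hNdef
  set Q : ℚ[X] := ∑ a ∈ Finset.range N, C ((e a : ℚ)) * X ^ a with hQdef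
  have hQcoeff : ∀ b, Q.coeff b = if b < N then (e b : ℚ) else 0 := by
    intro b
    rw [hQdef, finset_sum_coeff]
    simp only [coeff_C_mul, coeff_X_pow, mul_ite, mul_one, mul_zero]
    rw [Finset.sum_ite_eq (Finset.range N) b (fun a => ((e a : ℚ)))]
    simp [Finset.mem_range]
  have hev : aeval ζ Q = 0 := by
    rw [hQdef, map_sum, ← hsum]
    refine Finset.sum_congr rfl fun a _ => ?_
    rw [map_mul, aeval_C, map_pow, aeval_X, map_intCast]
  have hdvd : cyclotomic N ℚ ∣ Q := by
    rw [cyclotomic_eq_minpoly_rat hζ hNpos]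
    exact minpoly.dvd ℚ ζ hev
  obtain ⟨R, hR⟩ := hdvd
  have hpn : 0 < p ^ n := pow_pos hp.pos n
  have hN' : N = p ^ n * p := by rw [hNdef, pow_succ]
  have hRcoeff : ∀ m, p ^ n ≤ m → R.coeff m = 0 := by
    by_cases hR0 : R = 0
    · simp [hR0]
    intro m hm
    apply coeff_eq_zero_of_natDegree_lt
    have hQ0 : Q ≠ 0 := by rw [hR]; exact mul_ne_zero (cyclotomic_ne_zero N ℚ) hR0
    have hdegQ : Q.natDegree ≤ N - 1 := by
      apply natDegree_le_iff_coeff_eq_zero.mpr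
      intro m' hm'
      rw [hQcoeff, if_neg (by omega)]
    have hdegΦ : (cyclotomic N ℚ).natDegree = p ^ n * (p - 1) := by
      rw [natDegree_cyclotomic, hNdef, Nat.totient_prime_pow hp (by omega)]
      simp
    have hdm := natDegree_mul (cyclotomic_ne_zero N ℚ) hR0
    rw [← hR, hdegΦ] at hdm
    have hNsum : N = p ^ n * (p - 1) + p ^ n := by
      have hpp : p - 1 + 1 = p := Nat.succ_pred_eq_of_pos hp.pos
      rw [hN', ← hpp, Nat.mul_add, mul_one, hpp]
    rw [hNsum] at hdegQ
    omega
  intro r hr j hj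
  have hcoeff : ∀ j' < p, Q.coeff (r + j' * p ^ n) = R.coeff r := by
    intro j' hj'
    have hsplit : Q.coeff (r + j' * p ^ n)
        = ∑ i ∈ Finset.range p, (R * X ^ (i * p ^ n)).coeff (r + j' * p ^ n) := by
      rw [hR, hNdef, cyclotomic_prime_pow_eq_geom_sum hp, Finset.sum_mul, finset_sum_coeff]
      refine Finset.sum_congr rfl fun i _ => ?_
      rw [pow_mul', mul_comm]
    rw [hsplit, Finset.sum_eq_single j']
    · rw [coeff_mul_X_pow', if_pos (Nat.le_add_left _ _), Nat.add_sub_cancel]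
    · intro i hi hij
      rw [coeff_mul_X_pow']
      split_ifs with hle
      · apply hRcoeff
        rcases lt_or_gt_of_ne hij with h | h
        · have h3 : i * p ^ n + p ^ n ≤ j' * p ^ n := by
            have h2 : (i + 1) * p ^ n ≤ j' * p ^ n := Nat.mul_le_mul_right _ h
            rwa [add_one_mul] at h2
          omega
        · exfalso
          have h3 : j' * p ^ n + p ^ n ≤ i * p ^ n := by
            have h2 : (j' + 1) * p ^ n ≤ i * p ^ n := Nat.mul_le_mul_right _ h
            rwa [add_one_mul] at h2
          omega
      · rfl
    · intro h; exact absurd (Finset.mem_range.mpr hj') h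
  have hlt : ∀ j' < p, r + j' * p ^ n < N := by
    intro j' hj'
    have h2 : (j' + 1) * p ^ n ≤ p * p ^ n := Nat.mul_le_mul_right _ hj'
    rw [add_one_mul] at h2
    have : p * p ^ n = p ^ n * p := mul_comm _ _
    omega
  have e1 : (e (r + j * p ^ n) : ℚ) = R.coeff r := by
    rw [← hcoeff j hj, hQcoeff, if_pos (hlt j hj)]
  have e2 : (e r : ℚ) = R.coeff r := by
    have := hcoeff 0 hp.pos
    rw [hQcoeff] at this
    simp only [Nat.zero_mul, Nat.add_zero] at this
    rw [← this, if_pos (by simpa using hlt 0 hp.pos)]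
  exact_mod_cast e1.trans e2.symm


lemma count_rep (N : ℕ) (hN : 0 < N) (ζ : ℂ) (hζ : IsPrimitiveRoot ζ N)
    (s : Multiset ℂ) (hs : ∀ z ∈ s, z ^ N = 1) :
    s.sum = ∑ a ∈ Finset.range N, (s.count (ζ ^ a) : ℂ) * ζ ^ a := by
  haveI : NeZero N := ⟨hN.ne'⟩
  induction s using Multiset.induction with
  | empty => simp
  | cons z s ih =>
    have hz : z ^ N = 1 := hs z (Multiset.mem_cons_self z s)
    have ih' := ih (fun w hw => hs w (Multiset.mem_cons_of_mem hw))
    obtain ⟨a0, ha0N, ha0⟩ := hζ.eq_pow_of_pow_eq_one hz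
    rw [Multiset.sum_cons, ih']
    have hcc : ∀ a : ℕ, ((z ::ₘ s).count (ζ ^ a) : ℂ)
        = (s.count (ζ ^ a) : ℂ) + if ζ ^ a = z then 1 else 0 := by
      intro a
      rw [Multiset.count_cons]
      split_ifs <;> push_cast <;> ring
    simp only [hcc, add_mul]
    rw [Finset.sum_add_distrib, add_comm]
    congr 1
    rw [Finset.sum_eq_single a0]
    · rw [if_pos ha0, one_mul, ha0]
    · intro b hb hne
      rw [if_neg, zero_mul]
      intro hzeq
      exact hne (hζ.pow_inj (Finset.mem_range.mp hb) ha0N (hzeq.trans ha0.symm))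
    · intro h; exact absurd (Finset.mem_range.mpr ha0N) h

lemma coset_zero (p n : ℕ) (hp : p.Prime) (ζ : ℂ) (hζ : IsPrimitiveRoot ζ (p ^ (n + 1)))
    (r : ℕ) (hr : r < p ^ n) (s : Multiset ℂ)
    (hcount : ∀ j < p, 1 ≤ s.count (ζ ^ (r + j * p ^ n)))
    (hmin : ∀ t : Multiset ℂ, t ≤ s → t ≠ 0 → t.sum ≠ 0) : False := by
  have hpn : 0 < p ^ n := pow_pos hp.pos n
  have hNpos : 0 < p ^ (n + 1) := pow_pos hp.pos _
  have hlt : ∀ j < p, r + j * p ^ n < p ^ (n + 1) := by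
    intro j hj
    have h2 : (j + 1) * p ^ n ≤ p * p ^ n := Nat.mul_le_mul_right _ hj
    rw [add_one_mul] at h2
    have h3 : p * p ^ n = p ^ (n + 1) := (pow_succ' p n).symm
    omega
  set t : Multiset ℂ := (Finset.range p).val.map (fun j => ζ ^ (r + j * p ^ n)) with ht
  have hinj : ∀ i ∈ Finset.range p, ∀ j ∈ Finset.range p,
      ζ ^ (r + i * p ^ n) = ζ ^ (r + j * p ^ n) → i = j := by
    intro i hi j hj hij
    have := hζ.pow_inj (hlt i (Finset.mem_range.mp hi)) (hlt j (Finset.mem_range.mp hj)) hij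
    exact Nat.eq_of_mul_eq_mul_right hpn (by omega)
  have hnd : t.Nodup := Multiset.Nodup.map_on
    (fun i hi j hj => hinj i hi j hj) (Finset.range p).nodup
  have hle : t ≤ s := by
    rw [Multiset.le_iff_count]
    intro z
    by_cases hz : z ∈ t
    · have h1 : t.count z = 1 := Multiset.count_eq_one_of_mem hnd hz
      obtain ⟨j, hj, rfl⟩ := Multiset.mem_map.mp hz
      rw [h1]
      exact hcount j (by simpa using hj)
    · simp [Multiset.count_eq_zero_of_notMem hz]
  have hne : t ≠ 0 := by
    intro h0
    have hc : t.card = p := by simp [ht]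
    rw [h0, Multiset.card_zero] at hc
    exact hp.pos.ne' hc.symm
  have hω : IsPrimitiveRoot (ζ ^ p ^ n) p := hζ.pow hNpos (pow_succ p n)
  have hsum0 : t.sum = 0 := by
    have hts : t.sum = ∑ j ∈ Finset.range p, ζ ^ (r + j * p ^ n) := rfl
    rw [hts]
    calc ∑ j ∈ Finset.range p, ζ ^ (r + j * p ^ n)
        = ∑ j ∈ Finset.range p, ζ ^ r * (ζ ^ p ^ n) ^ j := by
          refine Finset.sum_congr rfl fun j _ => ?_
          rw [pow_add, ← pow_mul, mul_comm j]
      _ = ζ ^ r * ∑ j ∈ Finset.range p, (ζ ^ p ^ n) ^ j := by rw [Finset.mul_sum]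
      _ = 0 := by rw [hω.geom_sum_eq_zero hp.one_lt, mul_zero]
  exact hmin t hle hne hsum0

/-- two minimal (i.e. with no nonempty vanishing sub-multiset) multisets of
`p^k`-th roots of unity with the same value are equal. -/
theorem stmt2 (p k : ℕ) (hp : p.Prime) (hodd : Odd p) (hk : 2 ≤ k)
    (s₁ s₂ : Multiset ℂ)
    (hs₁ : ∀ z ∈ s₁, z ^ p ^ k = 1) (hs₂ : ∀ z ∈ s₂, z ^ p ^ k = 1)
    (hmin₁ : ∀ t : Multiset ℂ, t ≤ s₁ → t ≠ 0 → t.sum ≠ 0)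
    (hmin₂ : ∀ t : Multiset ℂ, t ≤ s₂ → t ≠ 0 → t.sum ≠ 0)
    (hval : s₁.sum = s₂.sum) :
    s₁ = s₂ := by
  obtain ⟨n, rfl⟩ : ∃ n, k = n + 1 := ⟨k - 1, by omega⟩
  have hNpos : 0 < p ^ (n + 1) := pow_pos hp.pos _
  haveI : NeZero (p ^ (n + 1)) := ⟨hNpos.ne'⟩
  obtain ⟨ζ, hζ⟩ : ∃ ζ : ℂ, IsPrimitiveRoot ζ (p ^ (n + 1)) :=
    ⟨_, Complex.isPrimitiveRoot_exp _ hNpos.ne'⟩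
  have hpn : 0 < p ^ n := pow_pos hp.pos n
  set e : ℕ → ℤ := fun a => (s₁.count (ζ ^ a) : ℤ) - (s₂.count (ζ ^ a) : ℤ) with hedef
  have hsum : ∑ a ∈ Finset.range (p ^ (n + 1)), (e a : ℂ) * ζ ^ a = 0 := by
    have hterm : ∀ a ∈ Finset.range (p ^ (n + 1)), (e a : ℂ) * ζ ^ a
        = (s₁.count (ζ ^ a) : ℂ) * ζ ^ a - (s₂.count (ζ ^ a) : ℂ) * ζ ^ a := by
      intro a _
      simp only [hedef]
      push_cast
      ring
    rw [Finset.sum_congr rfl hterm, Finset.sum_sub_distrib,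
      ← count_rep _ hNpos ζ hζ s₁ hs₁, ← count_rep _ hNpos ζ hζ s₂ hs₂, hval, sub_self]
  have hkey := key_const p n hp ζ hζ e hsum
  have hzr : ∀ r < p ^ n, e r = 0 := by
    intro r hr
    rcases lt_trichotomy (e r) 0 with h | h | h
    · exfalso
      refine coset_zero p n hp ζ hζ r hr s₂ ?_ hmin₂
      intro j hj
      have hk2 := hkey r hr j hj
      simp only [hedef] at hk2 h
      omega
    · exact h
    · exfalso
      refine coset_zero p n hp ζ hζ r hr s₁ ?_ hmin₁
      intro j hj
      have hk2 := hkey r hr j hj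
      simp only [hedef] at hk2 h
      omega
  have hzero : ∀ a < p ^ (n + 1), e a = 0 := by
    intro a ha
    have h1 : a % p ^ n < p ^ n := Nat.mod_lt _ hpn
    have h2 : a / p ^ n < p := by
      apply (Nat.div_lt_iff_lt_mul hpn).mpr
      calc a < p ^ (n + 1) := ha
        _ = p * p ^ n := pow_succ' p n
    have h3 : a = a % p ^ n + a / p ^ n * p ^ n := (Nat.mod_add_div' a (p ^ n)).symm
    rw [h3, hkey _ h1 _ h2, hzr _ h1]
  have hcnt : ∀ a < p ^ (n + 1), s₁.count (ζ ^ a) = s₂.count (ζ ^ a) := by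
    intro a ha
    have := hzero a ha
    simp only [hedef] at this
    omega
  apply Multiset.ext.mpr
  intro z
  by_cases hz1 : z ∈ s₁
  · obtain ⟨a, haN, rfl⟩ := hζ.eq_pow_of_pow_eq_one (hs₁ z hz1)
    exact hcnt a haN
  by_cases hz2 : z ∈ s₂
  · obtain ⟨a, haN, rfl⟩ := hζ.eq_pow_of_pow_eq_one (hs₂ z hz2)
    exact hcnt a haN
  rw [Multiset.count_eq_zero_of_notMem hz1, Multiset.count_eq_zero_of_notMem hz2]
end

section
/- Let p be an odd prime and k ≥ 2 an integer. If s₁ and s₂ are finite multisets of complex p^k-th roots of unity with |s₁| = |s₂|, then |s₁^{(p^k)}| = |s₂^{(p^k)}|, i.e., the sum of the entries of multiplicative order exactly p^k (with multiplicity) is the same for s₁ and s₂. -/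
open CategoryTheory

/-!
For `t < p` the exponent `1 + t p^(k-1)` is prime to `p^k`, so `z ↦ z^(1 + t p^(k-1))` on
`p^k`-th roots of unity is a Galois conjugation of `ℚ(ζ_{p^k})` and preserves every rational
relation, in particular `|s₁| = |s₂|`. Averaging over `t < p` kills each root `z` of order
exactly `p^k` (its terms are `z ω^t` with `ω = z^(p^(k-1))` a primitive `p`-th root of unity) and
multiplies every other root by `p`. Hence `p` times the sum over the entries of smaller order
agrees for `s₁` and `s₂`, and so does the remainder.
-/

open Finset Polynomial

theorem IsPrimitiveRoot.aeval_pow_eq_zero_of_coprime {K : Type*} [Field K] [CharZero K] {ζ : K}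
    {n c : ℕ} (hζ : IsPrimitiveRoot ζ n) (hn : 0 < n) (hc : c.Coprime n) {f : ℚ[X]}
    (hf : aeval ζ f = 0) : aeval (ζ ^ c) f = 0 := by
  have hmin : minpoly ℚ (ζ ^ c) = minpoly ℚ ζ := by
    rw [← cyclotomic_eq_minpoly_rat hζ hn, ← cyclotomic_eq_minpoly_rat (hζ.pow_of_coprime c hc) hn]
  refine aeval_eq_zero_of_dvd_aeval_eq_zero ?_ (minpoly.aeval ℚ (ζ ^ c))
  exact hmin ▸ minpoly.dvd ℚ ζ hf

theorem IsPrimitiveRoot.sum_map_pow_eq_of_sum_eq {K : Type*} [Field K] [CharZero K] {ζ : K}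
    {n c : ℕ} (hζ : IsPrimitiveRoot ζ n) (hn : 0 < n) (hc : c.Coprime n) {s₁ s₂ : Multiset K}
    (hs₁ : ∀ z ∈ s₁, z ^ n = 1) (hs₂ : ∀ z ∈ s₂, z ^ n = 1) (h : s₁.sum = s₂.sum) :
    (s₁.map (· ^ c)).sum = (s₂.map (· ^ c)).sum := by
  have : NeZero n := ⟨hn.ne'⟩
  choose! e he using fun z (hz : z ^ n = 1) => (hζ.eq_pow_of_pow_eq_one hz).imp fun _ => And.right
  -- `s.sum = ∑ ζ ^ e z` is the value at `ζ` of a rational polynomial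
  let lift (s : Multiset K) : ℚ[X] := (s.map fun z => X ^ e z).sum
  have aeval_lift (x : K) (s : Multiset K) :
      aeval x (lift s) = (s.map fun z => x ^ e z).sum := by
    simp [lift, map_multiset_sum, Multiset.map_map]
  have eval_pow (s : Multiset K) (hs : ∀ z ∈ s, z ^ n = 1) (d : ℕ) :
      (s.map fun z => (ζ ^ d) ^ e z).sum = (s.map (· ^ d)).sum := by
    refine congrArg Multiset.sum (Multiset.map_congr rfl fun z hz => ?_)
    rw [pow_right_comm, he z (hs z hz)]
  have hroot : aeval (ζ ^ c) (lift s₁ - lift s₂) = 0 := by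
    refine hζ.aeval_pow_eq_zero_of_coprime hn hc ?_
    have h₁ := eval_pow s₁ hs₁ 1
    have h₂ := eval_pow s₂ hs₂ 1
    simp only [pow_one, Multiset.map_id'] at h₁ h₂
    rw [map_sub, aeval_lift, aeval_lift, h₁, h₂, h, sub_self]
  rwa [map_sub, aeval_lift, aeval_lift, eval_pow s₁ hs₁, eval_pow s₂ hs₂, sub_eq_zero] at hroot

theorem Multiset.sum_filter {M : Type*} [AddCommMonoid M] (P : M → Prop) [DecidablePred P]
    (s : Multiset M) : (s.filter P).sum = (s.map fun z => if P z then z else 0).sum := by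
  induction s using Multiset.induction with
  | empty => simp
  | cons a s ih => by_cases h : P a <;> simp [h, ih]

theorem sum_range_pow_one_add_mul_prime_pow {K : Type*} [Field K] {p n : ℕ} [hp : Fact p.Prime]
    {z : K} (hz : z ^ p ^ (n + 1) = 1) :
    ∑ t ∈ range p, z ^ (1 + t * p ^ n) = p * if orderOf z = p ^ (n + 1) then 0 else z := by
  have hω : (z ^ p ^ n) ^ p = 1 := by rw [← pow_mul, ← pow_succ, hz]
  have hpow (t : ℕ) : z ^ (1 + t * p ^ n) = z * (z ^ p ^ n) ^ t := by
    rw [pow_add, pow_one, mul_comm t, pow_mul]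
  simp_rw [hpow, ← mul_sum]
  by_cases h : z ^ p ^ n = 1
  · have hord : orderOf z ≠ p ^ (n + 1) := fun hord =>
      pow_ne_one_of_lt_orderOf (pow_ne_zero n hp.out.ne_zero)
        (hord ▸ Nat.pow_lt_pow_succ hp.out.one_lt) h
    simp [h, hord, mul_comm]
  · rw [if_pos (orderOf_eq_prime_pow h hz), geom_sum_eq h, hω, sub_self, zero_div, mul_zero,
      mul_zero]

theorem sum_range_sum_map_pow_one_add_mul_prime_pow {K : Type*} [Field K] {p n : ℕ}
    [Fact p.Prime] {s : Multiset K} (hs : ∀ z ∈ s, z ^ p ^ (n + 1) = 1) :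
    ∑ t ∈ range p, (s.map (· ^ (1 + t * p ^ n))).sum
      = p * (s.filter fun z => ¬orderOf z = p ^ (n + 1)).sum := by
  rw [← Multiset.sum_map_sum, Multiset.map_congr rfl fun z hz =>
    sum_range_pow_one_add_mul_prime_pow (hs z hz), Multiset.sum_map_mul_left, Multiset.sum_filter]
  simp_rw [ite_not]

open scoped Classical in
theorem stmt3_general (p k : ℕ) (hp : p.Prime) (hk : 2 ≤ k)
    (s₁ s₂ : Multiset ℂ)
    (hs₁ : ∀ z ∈ s₁, z ^ p ^ k = 1) (hs₂ : ∀ z ∈ s₂, z ^ p ^ k = 1)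
    (hval : s₁.sum = s₂.sum) :
    (s₁.filter (fun z => orderOf z = p ^ k)).sum
      = (s₂.filter (fun z => orderOf z = p ^ k)).sum := by
  have : Fact p.Prime := ⟨hp⟩
  obtain ⟨n, rfl⟩ : ∃ n, k = n + 2 := ⟨k - 2, by omega⟩
  have hζ := Complex.isPrimitiveRoot_exp (p ^ (n + 2)) (pow_ne_zero _ hp.ne_zero)
  have hcop (t : ℕ) : (1 + t * p ^ (n + 1)).Coprime (p ^ (n + 2)) := by
    rw [pow_succ, ← mul_assoc]
    exact ((Nat.coprime_add_mul_right_left 1 p _).mpr (Nat.coprime_one_left p)).pow_right _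
  have hrest : (s₁.filter fun z => ¬orderOf z = p ^ (n + 2)).sum
      = (s₂.filter fun z => ¬orderOf z = p ^ (n + 2)).sum := by
    refine mul_left_cancel₀ (Nat.cast_ne_zero.mpr hp.ne_zero : (p : ℂ) ≠ 0) ?_
    rw [← sum_range_sum_map_pow_one_add_mul_prime_pow hs₁,
      ← sum_range_sum_map_pow_one_add_mul_prime_pow hs₂]
    exact sum_congr rfl fun t _ =>
      hζ.sum_map_pow_eq_of_sum_eq (pow_pos hp.pos _) (hcop t) hs₁ hs₂ hval
  linear_combination
    Multiset.sum_filter_add_sum_filter_not (s := s₁) (fun z => orderOf z = p ^ (n + 2)) -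
      Multiset.sum_filter_add_sum_filter_not (s := s₂) (fun z => orderOf z = p ^ (n + 2)) +
      hval - hrest

open scoped Classical in
/-- two multisets of `p^k`-th roots of unity with the same value have the same
sum over the entries of multiplicative order exactly `p^k`. -/
theorem stmt3 (p k : ℕ) (hp : p.Prime) (hodd : Odd p) (hk : 2 ≤ k)
    (s₁ s₂ : Multiset ℂ)
    (hs₁ : ∀ z ∈ s₁, z ^ p ^ k = 1) (hs₂ : ∀ z ∈ s₂, z ^ p ^ k = 1)
    (hval : s₁.sum = s₂.sum) :
    (s₁.filter (fun z => orderOf z = p ^ k)).sum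
      = (s₂.filter (fun z => orderOf z = p ^ k)).sum :=
  stmt3_general p k hp hk s₁ s₂ hs₁ hs₂ hval
end

section
/- Let p be an odd prime, k ≥ 2 an integer, and s a finite multiset of complex p^k-th roots of unity. Then the conductor of |s| equals p^k if and only if |s^{(p^k)}| ≠ 0. Equivalently, |s| does not lie in the cyclotomic field Q(ζ_{p^{k−1}}) if and only if the sum of the entries of s of multiplicative order exactly p^k is nonzero. -/
open CategoryTheory

/-!
Write `|s| = A + B`, where `A` is the sum of the entries of order exactly `p ^ k` and `B` the
sum of the others; `B` lies in `ℚ(ζ_{p^{k-1}})`. So it suffices to show that `A = 0` whenever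
`|s| ∈ ℚ(ζ_N)` for some `N` not divisible by `p ^ k`. Choose `c` prime to `p` with
`N ∣ p ^ (k-1) * c`. For `t < p`, the Galois automorphisms `σ_t : ζ ↦ ζ ^ (1 + p ^ (k-1) c t)`
of `ℚ(ζ_{N p^k})` fix `ℚ(ζ_N)`, hence `|s|`. Averaging over `t`, a root `z` of order `p ^ k`
contributes `z` times the sum of all `p`-th roots of unity, i.e. `0`, while any other root is
fixed by every `σ_t`. Hence `p |s| = p B`, that is `A = 0`.
-/

open IntermediateField Polynomial Finset

lemma Nat.one_add_mul_modEq_one {N L : ℕ} (h : N ∣ L) (t : ℕ) : 1 + L * t ≡ 1 [MOD N] :=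
  ((Nat.modEq_iff_dvd' (Nat.le_add_right 1 _)).2 (by simpa using dvd_mul_of_dvd_left h t)).symm

lemma Nat.Coprime.of_modEq_one {a N : ℕ} (h : a ≡ 1 [MOD N]) : a.Coprime N :=
  Nat.coprime_of_mul_modEq_one 1 (by simpa using h)

lemma Nat.exists_not_dvd_and_dvd_pow_pred_mul {p k N : ℕ} (hp : p.Prime) (hN : N ≠ 0)
    (h : ¬ p ^ k ∣ N) : ∃ c, ¬ p ∣ c ∧ N ∣ p ^ (k - 1) * c := by
  have hv : N.factorization p ≤ k - 1 := by
    by_contra hv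
    exact h ((hp.pow_dvd_iff_le_factorization hN).2 (by omega))
  refine ⟨N / p ^ N.factorization p, Nat.not_dvd_ordCompl hp hN, ?_⟩
  conv_lhs => rw [← Nat.ordProj_mul_ordCompl_eq_self N p]
  exact mul_dvd_mul_right (pow_dvd_pow p hv) _

lemma pow_prime_pow_pred_eq_one_of_orderOf_ne {G : Type*} [Monoid G] {z : G} {p k : ℕ}
    (hp : p.Prime) (hk : 1 ≤ k) (hz : z ^ p ^ k = 1) (h : orderOf z ≠ p ^ k) :
    z ^ p ^ (k - 1) = 1 := by
  have := Fact.mk hp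
  by_contra hne
  obtain ⟨j, rfl⟩ : ∃ j, k = j + 1 := ⟨k - 1, by omega⟩
  exact h (orderOf_eq_prime_pow hne hz)

section RootsOfUnity

variable {R : Type*} [CommRing R] {z : R} {n : ℕ}

lemma sum_range_pow_one_add_mul_of_pow_eq_one (p c : ℕ) (hz : z ^ n = 1) :
    ∑ t ∈ range p, z ^ (1 + n * c * t) = p * z := by
  have : ∀ t, z ^ (1 + n * c * t) = z := fun t => by
    rw [pow_add, pow_one, mul_assoc, pow_mul, hz, one_pow, mul_one]
  simp [this]

variable [IsDomain R]

lemma sum_range_pow_one_add_mul_of_isPrimitiveRoot {p c : ℕ} (hp : p.Prime) (hc : ¬ p ∣ c)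
    (hn : n ≠ 0) (hz : IsPrimitiveRoot z (n * p)) :
    ∑ t ∈ range p, z ^ (1 + n * c * t) = 0 := by
  have hω : IsPrimitiveRoot ((z ^ n) ^ c) p :=
    (hz.pow (Nat.mul_pos (Nat.pos_of_ne_zero hn) hp.pos) rfl).pow_of_coprime c
      (hp.coprime_iff_not_dvd.2 hc).symm
  have : ∀ t, z ^ (1 + n * c * t) = z * ((z ^ n) ^ c) ^ t := fun t => by
    rw [pow_add, pow_one, pow_mul, pow_mul]
  simp only [this, ← mul_sum, hω.geom_sum_eq_zero hp.one_lt, mul_zero]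

lemma multiset_sum_map_sum_range_pow {p k c : ℕ} (hp : p.Prime) (hk : 1 ≤ k) (hc : ¬ p ∣ c)
    {s : Multiset R} (hs : ∀ z ∈ s, z ^ p ^ k = 1) :
    (s.map fun z => ∑ t ∈ range p, z ^ (1 + p ^ (k - 1) * c * t)).sum
      = p * (s.filter fun z => ¬ orderOf z = p ^ k).sum := by
  conv_lhs => rw [← Multiset.filter_add_not (orderOf · = p ^ k) s]
  rw [Multiset.map_add, Multiset.sum_add, Multiset.sum_eq_zero, zero_add]
  · have hlow : ∀ z ∈ s.filter fun z => ¬ orderOf z = p ^ k,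
        ∑ t ∈ range p, z ^ (1 + p ^ (k - 1) * c * t) = p * z := fun z hz => by
      rw [Multiset.mem_filter] at hz
      exact sum_range_pow_one_add_mul_of_pow_eq_one p c
        (pow_prime_pow_pred_eq_one_of_orderOf_ne hp hk (hs z hz.1) hz.2)
    rw [Multiset.map_congr rfl hlow, Multiset.sum_map_mul_left, Multiset.map_id']
  · simp only [Multiset.mem_map, Multiset.mem_filter]
    rintro _ ⟨z, ⟨-, hz⟩, rfl⟩
    rw [← pow_sub_one_mul (by omega : k ≠ 0)] at hz
    exact sum_range_pow_one_add_mul_of_isPrimitiveRoot hp hc (pow_ne_zero _ hp.ne_zero)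
      (hz ▸ IsPrimitiveRoot.orderOf z)

end RootsOfUnity

lemma mem_Qcyc_of_pow_eq_one {N : ℕ} {z : ℂ} (hz : z ^ N = 1) : z ∈ Qcyc N :=
  subset_adjoin ℚ _ hz

lemma Qcyc_le_Qcyc_of_dvd {N M : ℕ} (h : N ∣ M) : Qcyc N ≤ Qcyc M :=
  adjoin_le_iff.2 fun z hz => by
    obtain ⟨c, rfl⟩ := h
    exact mem_Qcyc_of_pow_eq_one (by rw [pow_mul, hz, one_pow])

lemma Qcyc_le_adjoin_of_isPrimitiveRoot {M : ℕ} [NeZero M] {ζ : ℂ} (hζ : IsPrimitiveRoot ζ M) :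
    Qcyc M ≤ ℚ⟮ζ⟯ :=
  adjoin_le_iff.2 fun z hz => by
    obtain ⟨j, -, rfl⟩ := hζ.eq_pow_of_pow_eq_one hz
    exact pow_mem (mem_adjoin_simple_self ℚ ζ) j

lemma exists_algHom_Qcyc_apply_eq_pow {M i : ℕ} (hM : M ≠ 0) (hi : i.Coprime M) :
    ∃ σ : Qcyc M →ₐ[ℚ] ℂ, ∀ z (hz : z ^ M = 1), σ ⟨z, mem_Qcyc_of_pow_eq_one hz⟩ = z ^ i := by
  have : NeZero M := ⟨hM⟩
  obtain ⟨ζ, hζ⟩ : ∃ ζ : ℂ, IsPrimitiveRoot ζ M := ⟨_, Complex.isPrimitiveRoot_exp M hM⟩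
  have hint : IsIntegral ℚ ζ := (hζ.isIntegral (Nat.pos_of_ne_zero hM)).tower_top
  have hroot : ζ ^ i ∈ (minpoly ℚ ζ).aroots ℂ := by
    rw [← cyclotomic_eq_minpoly_rat hζ (Nat.pos_of_ne_zero hM),
      cyclotomic_eq_minpoly_rat (hζ.pow_of_coprime i hi) (Nat.pos_of_ne_zero hM)]
    exact mem_aroots.2 ⟨minpoly.ne_zero (((hζ.pow_of_coprime i hi).isIntegral
      (Nat.pos_of_ne_zero hM)).tower_top), minpoly.aeval ℚ _⟩
  let ψ := (algHomAdjoinIntegralEquiv ℚ hint).symm ⟨ζ ^ i, hroot⟩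
  have hle := Qcyc_le_adjoin_of_isPrimitiveRoot hζ
  -- The `ℚ`-algebra structure on `Qcyc M` in the statement is `DivisionRing.toRatAlgebra`, not
  refine ⟨(ψ.toRingHom.comp (inclusion hle).toRingHom).toRatAlgHom, fun z hz => ?_⟩
  obtain ⟨j, -, rfl⟩ := hζ.eq_pow_of_pow_eq_one hz
  have hgen : inclusion hle ⟨ζ ^ j, mem_Qcyc_of_pow_eq_one hz⟩ = AdjoinSimple.gen ℚ ζ ^ j := rfl
  change ψ (inclusion _ _) = _
  rw [hgen, map_pow, algHomAdjoinIntegralEquiv_symm_apply_gen, ← pow_mul,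
    ← pow_mul, mul_comm]

lemma algHom_apply_eq_self_of_mem_Qcyc {M N : ℕ} (hNM : Qcyc N ≤ Qcyc M) (σ : Qcyc M →ₐ[ℚ] ℂ)
    (hσ : ∀ z (hz : z ^ N = 1), σ ⟨z, hNM (mem_Qcyc_of_pow_eq_one hz)⟩ = z)
    {x : ℂ} (hx : x ∈ Qcyc N) : σ ⟨x, hNM hx⟩ = x := by
  have : σ.comp (inclusion hNM) = (Qcyc N).val := algHom_ext_of_eq_adjoin ℚ rfl hσ
  exact DFunLike.congr_fun this ⟨x, hx⟩

lemma algHom_multiset_sum {K : IntermediateField ℚ ℂ} (σ : K →ₐ[ℚ] ℂ) (f : ℂ → ℂ)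
    (s : Multiset ℂ) (hs : ∀ z ∈ s, z ∈ K) (hσ : ∀ z ∈ s, ∀ hz : z ∈ K, σ ⟨z, hz⟩ = f z) :
    σ ⟨s.sum, multiset_sum_mem s hs⟩ = (s.map f).sum := by
  induction s using Multiset.induction_on with
  | empty => exact map_zero σ
  | cons a s ih =>
    simp only [Multiset.mem_cons, forall_eq_or_imp] at hs hσ
    have : (⟨(a ::ₘ s).sum, multiset_sum_mem _ (by simpa using hs)⟩ : K)
        = ⟨a, hs.1⟩ + ⟨s.sum, multiset_sum_mem s hs.2⟩ := by ext; simp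
    rw [this, map_add, hσ.1, ih hs.2 hσ.2, Multiset.map_cons, Multiset.sum_cons]

lemma multiset_sum_map_pow_eq_of_mem_Qcyc {M N i : ℕ} (hM : M ≠ 0) (hNM : N ∣ M)
    (hi : i.Coprime M) (hiN : i ≡ 1 [MOD N]) {s : Multiset ℂ} (hs : ∀ z ∈ s, z ^ M = 1)
    (hmem : s.sum ∈ Qcyc N) : (s.map (· ^ i)).sum = s.sum := by
  obtain ⟨σ, hσ⟩ := exists_algHom_Qcyc_apply_eq_pow hM hi
  have hfix : ∀ z (hz : z ^ N = 1),
      σ ⟨z, Qcyc_le_Qcyc_of_dvd hNM (mem_Qcyc_of_pow_eq_one hz)⟩ = z := fun z hz => by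
    have hzN : orderOf z ∣ N := orderOf_dvd_of_pow_eq_one hz
    rw [hσ z (orderOf_dvd_iff_pow_eq_one.1 (hzN.trans hNM)), ← pow_mod_orderOf,
      Nat.ModEq.of_dvd hzN hiN, pow_mod_orderOf, pow_one]
  have hsM : ∀ z ∈ s, z ∈ Qcyc M := fun z hz => mem_Qcyc_of_pow_eq_one (hs z hz)
  calc (s.map (· ^ i)).sum = σ ⟨s.sum, multiset_sum_mem s hsM⟩ :=
        (algHom_multiset_sum σ _ s hsM fun z hz _ => hσ z (hs z hz)).symm
    _ = s.sum := algHom_apply_eq_self_of_mem_Qcyc _ σ hfix hmem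

lemma filter_orderOf_sum_eq_zero_of_mem_Qcyc {p k N : ℕ} (hp : p.Prime) (hk : 2 ≤ k)
    {s : Multiset ℂ} (hs : ∀ z ∈ s, z ^ p ^ k = 1) (hN : N ≠ 0) (hNk : ¬ p ^ k ∣ N)
    (hmem : s.sum ∈ Qcyc N) : (s.filter (orderOf · = p ^ k)).sum = 0 := by
  obtain ⟨c, hpc, hNc⟩ := Nat.exists_not_dvd_and_dvd_pow_pred_mul hp hN hNk
  have hpc' : p ∣ p ^ (k - 1) * c := dvd_mul_of_dvd_left (dvd_pow_self p (by omega)) c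
  have hinv : ∀ t, (s.map (· ^ (1 + p ^ (k - 1) * c * t))).sum = s.sum := fun t =>
    multiset_sum_map_pow_eq_of_mem_Qcyc (mul_ne_zero hN (pow_ne_zero k hp.ne_zero))
      (dvd_mul_right N _)
      ((Nat.Coprime.of_modEq_one (Nat.one_add_mul_modEq_one hNc t)).mul_right
        ((Nat.Coprime.of_modEq_one (Nat.one_add_mul_modEq_one hpc' t)).pow_right k))
      (Nat.one_add_mul_modEq_one hNc t) (fun z hz => by rw [pow_mul', hs z hz, one_pow]) hmem
  have hsum : (p : ℂ) * s.sum = p * (s.filter fun z => ¬ orderOf z = p ^ k).sum :=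
    calc (p : ℂ) * s.sum = ∑ t ∈ range p, (s.map (· ^ (1 + p ^ (k - 1) * c * t))).sum := by
          simp [hinv]
      _ = (s.map fun z => ∑ t ∈ range p, z ^ (1 + p ^ (k - 1) * c * t)).sum :=
          Multiset.sum_map_sum_map _ _
      _ = _ := multiset_sum_map_sum_range_pow hp (by omega) hpc hs
  have hsplit := Multiset.sum_filter_add_sum_filter_not (orderOf · = p ^ k) (s := s)
  apply mul_left_cancel₀ (Nat.cast_ne_zero.2 hp.ne_zero : (p : ℂ) ≠ 0)
  linear_combination hsum + (p : ℂ) * hsplit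

open scoped Classical in
theorem stmt4_general (p k : ℕ) (hp : p.Prime) (hk : 2 ≤ k)
    (s : Multiset ℂ) (hs : ∀ z ∈ s, z ^ p ^ k = 1) :
    (IsConductorOf s.sum (p ^ k) ↔ (s.filter (fun z => orderOf z = p ^ k)).sum ≠ 0) ∧
    (s.sum ∉ Qcyc (p ^ (k - 1)) ↔ (s.filter (fun z => orderOf z = p ^ k)).sum ≠ 0) := by
  have hpos : ∀ j, 0 < p ^ j := fun j => pow_pos hp.pos j
  have hlt : p ^ (k - 1) < p ^ k := Nat.pow_lt_pow_right hp.one_lt (by omega)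
  have hB : (s.filter fun z => ¬ orderOf z = p ^ k).sum ∈ Qcyc (p ^ (k - 1)) :=
    multiset_sum_mem _ fun z hz => mem_Qcyc_of_pow_eq_one <|
      pow_prime_pow_pred_eq_one_of_orderOf_ne hp (by omega) (hs z (Multiset.mem_filter.1 hz).1)
        (Multiset.mem_filter.1 hz).2
  have hA : ∀ N, 0 < N → ¬ p ^ k ∣ N → s.sum ∈ Qcyc N →
      (s.filter (fun z => orderOf z = p ^ k)).sum = 0 := fun N hN =>
    filter_orderOf_sum_eq_zero_of_mem_Qcyc hp hk hs hN.ne'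
  have hsplit := Multiset.sum_filter_add_sum_filter_not (fun z => orderOf z = p ^ k) (s := s)
  have hsub : s.sum ∉ Qcyc (p ^ (k - 1)) ↔ (s.filter (fun z => orderOf z = p ^ k)).sum ≠ 0 :=
    ⟨fun h h0 => h (by rwa [← hsplit, h0, zero_add]),
      fun h hmem => h (hA _ (hpos _) (Nat.not_dvd_of_pos_of_lt (hpos _) hlt) hmem)⟩
  refine ⟨⟨fun hcond => hsub.1 fun hmem => ?_, fun h => ⟨⟨hpos k, ?_⟩, ?_⟩⟩, hsub⟩
  · exact absurd (hcond.2 ⟨hpos _, hmem⟩) (not_le.2 hlt)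
  · exact multiset_sum_mem s fun z hz => mem_Qcyc_of_pow_eq_one (hs z hz)
  · rintro N ⟨hN, hmem⟩
    by_contra hNk
    exact h (hA N hN (fun hdvd => hNk (Nat.le_of_dvd hN hdvd)) hmem)

open scoped Classical in
/-- for a multiset `s` of `p^k`-th roots of unity, the conductor of `|s|`
is `p^k` iff the sum of the entries of order exactly `p^k` is nonzero; equivalently,
`|s| ∉ ℚ(ζ_{p^{k-1}})` iff that sum is nonzero. -/
theorem stmt4 (p k : ℕ) (hp : p.Prime) (hodd : Odd p) (hk : 2 ≤ k)
    (s : Multiset ℂ) (hs : ∀ z ∈ s, z ^ p ^ k = 1) :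
    (IsConductorOf s.sum (p ^ k) ↔ (s.filter (fun z => orderOf z = p ^ k)).sum ≠ 0) ∧
    (s.sum ∉ Qcyc (p ^ (k - 1)) ↔ (s.filter (fun z => orderOf z = p ^ k)).sum ≠ 0) :=
  stmt4_general p k hp hk s hs
end

section
/- Let z be a primitive 30th root of unity in ℂ. Then z^5 + z^6 + z^12 + z^18 + z^24 + z^25 = 0, but no nonempty proper sub-multiset of the multiset {z^5, z^6, z^12, z^18, z^24, z^25} has sum 0. Hence there exists a minimal vanishing sum of 30th roots of unity of length 6 that is not a rotation of a full sum over all p-th roots of unity for a single prime p. -/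
open CategoryTheory

/-!
The six terms split as `(z⁶ + z¹² + z¹⁸ + z²⁴) + (z⁵ + z²⁵)`. Since `z⁶` is a primitive fifth root
of unity the first bracket is `-1`, and since `w = z⁵` is a primitive sixth root of unity,
`w² - w + 1 = 0` gives `w + w⁵ = 1`. For minimality, reduce a rational relation
`∑ cᵢ z^{eᵢ} = 0` modulo `Φ₃₀` to a polynomial of degree `< 8 = φ(30)`; as `1, z, …, z⁷` are
`ℚ`-linearly independent, its coefficients vanish, which forces all `cᵢ` to be equal. A
sub-multiset yields such a relation with `0/1` coefficients, so it is empty or everything. Finally,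
a rotated full sum of `q`-th roots has `q` terms, and `6` is not prime.
-/

theorem Multiset.exists_le_map_eq_of_le_map {α β : Type*} {f : α → β} {s : Multiset α}
    {t : Multiset β} (h : t ≤ s.map f) : ∃ u ≤ s, u.map f = t := by
  induction s, t using Quotient.inductionOn₂ with
  | h m l =>
    obtain ⟨l', hperm, hsub⟩ := Multiset.coe_le.1 h
    obtain ⟨x, hx, rfl⟩ := List.sublist_map_iff.1 hsub
    exact ⟨x, Multiset.coe_le.2 hx.subperm, Multiset.coe_eq_coe.2 hperm⟩

namespace IsPrimitiveRoot

open Polynomial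

theorem linearIndependent_pow {K : Type*} [Field K] [CharZero K] {z : K} {n : ℕ}
    (hz : IsPrimitiveRoot z n) (hn : 0 < n) :
    LinearIndependent ℚ fun i : Fin n.totient => z ^ (i : ℕ) := by
  have h := _root_.linearIndependent_pow (K := ℚ) z
  rwa [← cyclotomic_eq_minpoly_rat hz hn, natDegree_cyclotomic] at h

theorem sq_sub_self_add_one_eq_zero {R : Type*} [CommRing R] [IsDomain R] {w : R}
    (hw : IsPrimitiveRoot w 6) : w ^ 2 - w + 1 = 0 := by
  simpa [cyclotomic_six] using hw.isRoot_cyclotomic (by norm_num)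

theorem pow_five_of_thirty {z : ℂ} (hz : IsPrimitiveRoot z 30) : IsPrimitiveRoot (z ^ 5) 6 :=
  hz.pow_of_dvd (by norm_num) (by norm_num)

theorem pow_six_of_thirty {z : ℂ} (hz : IsPrimitiveRoot z 30) : IsPrimitiveRoot (z ^ 6) 5 :=
  hz.pow_of_dvd (by norm_num) (by norm_num)

theorem cyclotomic_thirty_eval {z : ℂ} (hz : IsPrimitiveRoot z 30) :
    z ^ 8 + z ^ 7 - z ^ 5 - z ^ 4 - z ^ 3 + z + 1 = 0 := by
  have hsix := hz.pow_five_of_thirty.sq_sub_self_add_one_eq_zero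
  have hne : z ^ 2 - z + 1 ≠ 0 := fun h ↦
    hz.pow_ne_one_of_pos_of_lt (by norm_num) (by norm_num)
      (by linear_combination (z ^ 4 + z ^ 3 - z - 1) * h : z ^ 6 = 1)
  refine (mul_eq_zero.1 ?_).resolve_left hne
  linear_combination hsix

end IsPrimitiveRoot

def sixRoots (z : ℂ) : Fin 6 → ℂ := ![z ^ 5, z ^ 6, z ^ 12, z ^ 18, z ^ 24, z ^ 25]

theorem sum_sixRoots {z : ℂ} (hz : IsPrimitiveRoot z 30) : ∑ i, sixRoots z i = 0 := by
  have hfive := hz.pow_six_of_thirty.geom_sum_eq_zero (by norm_num)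
  have hsix := hz.pow_five_of_thirty.sq_sub_self_add_one_eq_zero
  simp only [Finset.sum_range_succ, Finset.sum_range_zero] at hfive
  simp only [sixRoots, Fin.sum_univ_six, Fin.isValue, Matrix.cons_val_zero, Matrix.cons_val_one,
    Matrix.cons_val]
  linear_combination hfive + (z ^ 15 + z ^ 10 - 1) * hsix

theorem eq_of_sum_mul_sixRoots_eq_zero {z : ℂ} (hz : IsPrimitiveRoot z 30) (c : Fin 6 → ℚ)
    (h : ∑ i, (c i : ℂ) * sixRoots z i = 0) (i : Fin 6) : c i = c 5 := by
  have hΦ := hz.cyclotomic_thirty_eval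
  have hli := hz.linearIndependent_pow (by norm_num)
  rw [show Nat.totient 30 = 8 by decide] at hli
  -- the vector is the remainder of `∑ cᵢ X^{eᵢ}` modulo `Φ₃₀`, the multiplier of `hΦ` the quotient
  have hg := Fintype.linearIndependent_iff.1 hli
    ![c 5 - c 4, 0, c 4 - c 2, c 4 - c 3, 0, c 0 - c 5, c 1 - c 4, c 2 - c 4] (by
      simp only [sixRoots, Fin.sum_univ_six, Fin.sum_univ_eight] at h ⊢
      simp only [Fin.isValue, Matrix.cons_val_zero, Matrix.cons_val_one, Matrix.cons_val,
        Fin.coe_ofNat_eq_mod, Nat.zero_mod, pow_zero, Rat.smul_def, Rat.cast_sub, mul_one,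
        Nat.one_mod, pow_one, zero_smul, add_zero, Nat.reduceMod, Nat.mod_succ] at h ⊢
      linear_combination h - ((c 4 - c 5 : ℂ) + (c 5 - c 4) * z + (c 2 - c 5) * z ^ 2
        + (c 3 - c 2) * z ^ 3 + (c 2 - c 3) * z ^ 4 + c 3 * z ^ 5 + c 3 * z ^ 8
        + (c 4 - c 3) * z ^ 9 + (c 3 - c 4 + c 5) * z ^ 10 + (c 4 - c 5) * z ^ 11
        + c 5 * z ^ 12 + c 4 * z ^ 14 + (c 5 - c 4) * z ^ 15 + (c 4 - c 5) * z ^ 16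
        + c 5 * z ^ 17) * hΦ)
  have e0 : c 5 - c 4 = 0 := hg 0
  have e2 : c 4 - c 2 = 0 := hg 2
  have e3 : c 4 - c 3 = 0 := hg 3
  have e5 : c 0 - c 5 = 0 := hg 5
  have e6 : c 1 - c 4 = 0 := hg 6
  fin_cases i <;> simp <;> linarith

theorem sum_map_sixRoots_ne_zero {z : ℂ} (hz : IsPrimitiveRoot z 30) {s : Finset (Fin 6)}
    (hs : s.Nonempty) (hs' : s ≠ Finset.univ) : (s.val.map (sixRoots z)).sum ≠ 0 := by
  intro h
  obtain ⟨i, hi⟩ := hs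
  obtain ⟨j, hj⟩ := Finset.exists_of_ssubset (Finset.ssubset_univ_iff.2 hs')
  have hrel := eq_of_sum_mul_sixRoots_eq_zero hz (fun k ↦ if k ∈ s then 1 else 0) (by
    rw [← Finset.sum_eq_multiset_sum] at h
    simpa [apply_ite (Rat.cast : ℚ → ℂ), ite_mul, Finset.sum_ite_mem] using h)
  have := (hrel i).trans (hrel j).symm
  simp [hi, hj] at this

/-- for a primitive 30th root of unity `z`, the multiset
`{z⁵, z⁶, z¹², z¹⁸, z²⁴, z²⁵}` is a vanishing sum of 30th roots of unity with no nonempty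
proper vanishing sub-multiset; being of length 6, it is not a rotation of the full sum over
all `q`-th roots of unity for a single prime `q`. -/
theorem stmt18 (z : ℂ) (hz : IsPrimitiveRoot z 30) :
    z ^ 5 + z ^ 6 + z ^ 12 + z ^ 18 + z ^ 24 + z ^ 25 = 0 ∧
    (∀ t : Multiset ℂ,
      t < ({z ^ 5, z ^ 6, z ^ 12, z ^ 18, z ^ 24, z ^ 25} : Multiset ℂ) → t ≠ 0 →
        t.sum ≠ 0) ∧
    (∀ q : ℕ, q.Prime → ∀ w y : ℂ, IsPrimitiveRoot y q →
      ({z ^ 5, z ^ 6, z ^ 12, z ^ 18, z ^ 24, z ^ 25} : Multiset ℂ) ≠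
        (Multiset.range q).map (fun i => w * y ^ i)) := by
  have hmap : ({z ^ 5, z ^ 6, z ^ 12, z ^ 18, z ^ 24, z ^ 25} : Multiset ℂ) =
      Finset.univ.val.map (sixRoots z) := rfl
  refine ⟨by simpa [sixRoots, Fin.sum_univ_six] using sum_sixRoots hz, ?_, ?_⟩
  · intro t ht ht0
    rw [hmap] at ht
    obtain ⟨u, hu, rfl⟩ := Multiset.exists_le_map_eq_of_le_map ht.le
    let s : Finset (Fin 6) := ⟨u, Multiset.nodup_of_le hu Finset.univ.nodup⟩
    refine sum_map_sixRoots_ne_zero hz (s := s) ?_ ?_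
    · refine Finset.nonempty_iff_ne_empty.2 fun hs ↦ ht0 ?_
      rw [show u = 0 from Finset.val_eq_zero.2 hs, Multiset.map_zero]
    · exact fun hs ↦ ht.ne (by rw [show u = Finset.univ.val from congrArg Finset.val hs])
  · intro q hq w y _ heq
    have hcard : 6 = q := by simpa using congrArg Multiset.card heq
    subst hcard
    norm_num at hq
end
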